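/- Let $w \in RH_p$ with $1 < p \le \infty$ and $v \in RH_q(w)$ with $1 < q \le \infty$. Then for every ball $B$ and every measurable $E \subset B$, $vw(E)/vw(B) \le [v]_{RH_q(w)} [w]_{RH_p}^{1/q'} (|E|/|B|)^{1/(p'q')}$. -/

import Mathlib

open MeasureTheory Metric ENNReal NNReal Set

noncomputable section

/-- `w ∈ RH_p` with constant at most `C`, for `1 < p ≤ ∞`, with respect to Lebesgue measure. -/
def rhBound (n : ℕ) (w : EuclideanSpace ℝ (Fin n) → ℝ≥0∞) (p : ℝ≥0∞) (C : ℝ≥0∞) : Prop :=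
  ∀ (c : EuclideanSpace ℝ (Fin n)) (r : ℝ), 0 < r →
    (if p = ∞ then essSup w (volume.restrict (ball c r))
      else ((∫⁻ x in ball c r, (w x) ^ p.toReal) / volume (ball c r)) ^ (1 / p.toReal))
      ≤ C * ((∫⁻ x in ball c r, w x) / volume (ball c r))

/-- `v ∈ RH_q(w)` with constant at most `C`, for `1 < q ≤ ∞`, with respect to the measure
`dw = w dx`. -/
def rhBoundW (n : ℕ) (w v : EuclideanSpace ℝ (Fin n) → ℝ≥0∞) (q : ℝ≥0∞) (C : ℝ≥0∞) : Prop :=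
  ∀ (c : EuclideanSpace ℝ (Fin n)) (r : ℝ), 0 < r →
    (if q = ∞ then essSup v ((volume.withDensity w).restrict (ball c r))
      else ((∫⁻ x in ball c r, (v x) ^ q.toReal * w x) /
              (∫⁻ x in ball c r, w x)) ^ (1 / q.toReal))
      ≤ C * ((∫⁻ x in ball c r, v x * w x) / (∫⁻ x in ball c r, w x))

/-!
Hölder's inequality on `E` gives `∫_E f dμ ≤ ‖f‖_{L^p(B, μ)} μ(E)^{1/p'}`, and the reverse Hölder
inequality bounds `‖f‖_{L^p(B, μ)}` by `C μ(B)^{1/p}` times the `μ`-average of `f` over `B`, so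
`∫_E f dμ / ∫_B f dμ ≤ C (μ(E)/μ(B))^{1/p'}`. For `f = w` and Lebesgue measure this compares
`w(E)/w(B)` with `|E|/|B|`; for `f = v` and `dμ = w dx` it compares `vw(E)/vw(B)` with
`w(E)/w(B)`. Chaining the two gives the exponent `1/(p'q')`.
-/

namespace MeasureTheory

variable {α : Type*} [MeasurableSpace α] {μ : Measure α} {f : α → ℝ≥0∞} {p C : ℝ≥0∞}

/-- `(⨍ f ^ p dμ) ^ (1/p) ≤ C ⨍ f dμ` (with `essSup f` on the left for `p = ∞`), averages being
taken over the whole space; for a ball `B` apply it to `μ.restrict B`. -/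
def ReverseHolderWith (μ : Measure α) (p C : ℝ≥0∞) (f : α → ℝ≥0∞) : Prop :=
  eLpNorm f p μ / μ univ ^ (1 / p.toReal) ≤ C * ((∫⁻ x, f x ∂μ) / μ univ)

theorem eLpNorm_div_measure_univ_rpow_eq (μ : Measure α) (f : α → ℝ≥0∞) (hp : p ≠ 0) :
    eLpNorm f p μ / μ univ ^ (1 / p.toReal) =
      if p = ∞ then essSup f μ
      else ((∫⁻ x, f x ^ p.toReal ∂μ) / μ univ) ^ (1 / p.toReal) := by
  split_ifs with hptop
  · simp [hptop, eLpNormEssSup]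
  · rw [eLpNorm_eq_lintegral_rpow_enorm_toReal hp hptop,
      ENNReal.div_rpow_of_nonneg _ _ (by positivity)]
    simp only [enorm_eq_self]

theorem _root_.ENNReal.toReal_one_sub_one_div (hp : 1 ≤ p) :
    (1 - 1 / p).toReal = 1 - 1 / p.toReal := by
  rw [ENNReal.toReal_sub_of_le (ENNReal.div_le_of_le_mul (by simpa using hp)) ENNReal.one_ne_top,
    ENNReal.toReal_div, ENNReal.toReal_one]

theorem setLIntegral_le_eLpNorm_mul_rpow (hp : 1 ≤ p) (hf : AEStronglyMeasurable f μ)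
    (E : Set α) : ∫⁻ x in E, f x ∂μ ≤ eLpNorm f p μ * μ E ^ (1 - 1 / p).toReal := by
  have h := eLpNorm_le_eLpNorm_mul_rpow_measure_univ (f := f) (p := 1) (q := p) hp hf.restrict
    (μ := μ.restrict E)
  rw [eLpNorm_one_eq_lintegral_enorm, Measure.restrict_apply_univ] at h
  simp only [enorm_eq_self, ENNReal.toReal_one, div_one] at h
  rw [ENNReal.toReal_one_sub_one_div hp]
  exact h.trans (by gcongr; exact Measure.restrict_le_self)

theorem setLIntegral_withDensity_eq_setLIntegral_mul' {g : α → ℝ≥0∞} (hf : Measurable f)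
    (hg : Measurable g) {s : Set α} (hs : MeasurableSet s) :
    ∫⁻ x in s, g x ∂μ.withDensity f = ∫⁻ x in s, g x * f x ∂μ := by
  rw [setLIntegral_withDensity_eq_setLIntegral_mul _ hf hg hs]
  simp only [Pi.mul_apply, mul_comm]

theorem ReverseHolderWith.setLIntegral_div_lintegral_le [IsFiniteMeasure μ]
    (h : ReverseHolderWith μ p C f) (hp : 1 ≤ p) (hf : AEStronglyMeasurable f μ) (E : Set α) :
    (∫⁻ x in E, f x ∂μ) / (∫⁻ x, f x ∂μ) ≤ C * (μ E / μ univ) ^ (1 - 1 / p).toReal := by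
  rcases eq_zero_or_neZero μ with rfl | hμ
  · simp
  set U := μ univ
  set s := 1 / p.toReal
  set a := (1 - 1 / p).toReal
  have hU0 : U ≠ 0 := (NeZero.ne μ) ∘ Measure.measure_univ_eq_zero.mp
  have hUtop : U ≠ ∞ := measure_ne_top μ univ
  have hsa : s + a = 1 := by
    simp only [s, a, ENNReal.toReal_one_sub_one_div hp]; ring
  have hUinv : U⁻¹ * U ^ s = (U ^ a)⁻¹ := by
    rw [← ENNReal.rpow_neg_one, ← ENNReal.rpow_add _ _ hU0 hUtop, ← ENNReal.rpow_neg]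
    congr 1; linarith
  apply ENNReal.div_le_of_le_mul
  calc ∫⁻ x in E, f x ∂μ ≤ eLpNorm f p μ * μ E ^ a := setLIntegral_le_eLpNorm_mul_rpow hp hf E
    _ = eLpNorm f p μ / U ^ s * (U ^ s * μ E ^ a) := by
        rw [← mul_assoc, ENNReal.div_mul_cancel (by positivity) (by finiteness)]
    _ ≤ C * ((∫⁻ x, f x ∂μ) / U) * (U ^ s * μ E ^ a) := by gcongr; exact h
    _ = C * (μ E / U) ^ a * ∫⁻ x, f x ∂μ := by
        rw [ENNReal.div_rpow_of_nonneg _ _ ENNReal.toReal_nonneg, div_eq_mul_inv, div_eq_mul_inv,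
          ← hUinv]
        ring

theorem ReverseHolderWith.setLIntegral_div_setLIntegral_le {B E : Set α}
    (h : ReverseHolderWith (μ.restrict B) p C f) (hB : μ B ≠ ∞) (hp : 1 ≤ p)
    (hf : AEStronglyMeasurable f μ) (hEB : E ⊆ B) :
    (∫⁻ x in E, f x ∂μ) / (∫⁻ x in B, f x ∂μ) ≤ C * (μ E / μ B) ^ (1 - 1 / p).toReal := by
  have : IsFiniteMeasure (μ.restrict B) := isFiniteMeasure_restrict.mpr hB
  simpa only [Measure.restrict_restrict_of_subset hEB, Measure.restrict_apply_univ,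
    Measure.restrict_eq_self _ hEB] using h.setLIntegral_div_lintegral_le hp hf.restrict E

end MeasureTheory

theorem rhBound.reverseHolderWith {n : ℕ} {w : EuclideanSpace ℝ (Fin n) → ℝ≥0∞} {p C : ℝ≥0∞}
    (h : rhBound n w p C) (hp : p ≠ 0) (c : EuclideanSpace ℝ (Fin n)) {r : ℝ} (hr : 0 < r) :
    ReverseHolderWith (volume.restrict (ball c r)) p C w := by
  rw [ReverseHolderWith, eLpNorm_div_measure_univ_rpow_eq _ _ hp, Measure.restrict_apply_univ]
  exact h c r hr

theorem rhBoundW.reverseHolderWith {n : ℕ} {w v : EuclideanSpace ℝ (Fin n) → ℝ≥0∞}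
    {q C : ℝ≥0∞} (h : rhBoundW n w v q C) (hw : Measurable w) (hv : Measurable v) (hq : q ≠ 0)
    (c : EuclideanSpace ℝ (Fin n)) {r : ℝ} (hr : 0 < r) :
    ReverseHolderWith ((volume.withDensity w).restrict (ball c r)) q C v := by
  rw [ReverseHolderWith, eLpNorm_div_measure_univ_rpow_eq _ _ hq, Measure.restrict_apply_univ,
    withDensity_apply _ measurableSet_ball,
    setLIntegral_withDensity_eq_setLIntegral_mul' hw hv measurableSet_ball,
    setLIntegral_withDensity_eq_setLIntegral_mul' hw (hv.pow_const _) measurableSet_ball]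
  exact h c r hr

theorem rh_rhw_measure_estimate_general
    (n : ℕ) (w v : EuclideanSpace ℝ (Fin n) → ℝ≥0∞) (p q : ℝ≥0∞) (hp : 1 < p) (hq : 1 < q)
    (Cw Cv : ℝ≥0∞)
    (hw : Measurable w) (hv : Measurable v)
    (hwloc : ∀ (c : EuclideanSpace ℝ (Fin n)) (r : ℝ), 0 < r →
      0 < (∫⁻ x in ball c r, w x) ∧ (∫⁻ x in ball c r, w x) ≠ ∞)
    (hRHp : rhBound n w p Cw) (hRHq : rhBoundW n w v q Cv)
    (c : EuclideanSpace ℝ (Fin n)) (r : ℝ) (hr : 0 < r)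
    (E : Set (EuclideanSpace ℝ (Fin n))) (hE : MeasurableSet E) (hEB : E ⊆ ball c r) :
    (∫⁻ x in E, v x * w x) / (∫⁻ x in ball c r, v x * w x) ≤
      Cv * Cw ^ ((1 - 1/q).toReal) *
        ((volume E) / (volume (ball c r))) ^ (((1 - 1/p) * (1 - 1/q)).toReal) := by
  have hB : MeasurableSet (ball c r) := measurableSet_ball
  have hwE := (hRHp.reverseHolderWith (zero_lt_one.trans hp).ne' c hr)
    |>.setLIntegral_div_setLIntegral_le measure_ball_lt_top.ne hp.le hw.aestronglyMeasurable hEB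
  have hvE := (hRHq.reverseHolderWith hw hv (zero_lt_one.trans hq).ne' c hr)
    |>.setLIntegral_div_setLIntegral_le (by rw [withDensity_apply _ hB]; exact (hwloc c r hr).2)
      hq.le hv.aestronglyMeasurable hEB
  rw [withDensity_apply _ hE, withDensity_apply _ hB,
    setLIntegral_withDensity_eq_setLIntegral_mul' hw hv hE,
    setLIntegral_withDensity_eq_setLIntegral_mul' hw hv hB] at hvE
  calc _ ≤ Cv * ((∫⁻ x in E, w x) / (∫⁻ x in ball c r, w x)) ^ (1 - 1 / q).toReal := hvE
    _ ≤ Cv * (Cw * (volume E / volume (ball c r)) ^ (1 - 1 / p).toReal) ^ (1 - 1 / q).toReal := by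
      gcongr
    _ = _ := by
      rw [ENNReal.mul_rpow_of_nonneg _ _ ENNReal.toReal_nonneg, ← ENNReal.rpow_mul,
        ENNReal.toReal_mul, mul_assoc]

/-- Let `w ∈ RH_p` (constant `Cw`) with `1 < p ≤ ∞` and `v ∈ RH_q(w)`
(constant `Cv`) with `1 < q ≤ ∞`. Then for every ball `B = B(c,r)` and measurable `E ⊆ B`,
`vw(E)/vw(B) ≤ Cv · Cw^(1/q') · (|E|/|B|)^(1/(p'q'))`, where `1/p' = 1 - 1/p` and
`1/q' = 1 - 1/q`. -/
theorem rh_rhw_measure_estimate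
    (n : ℕ) (w v : EuclideanSpace ℝ (Fin n) → ℝ≥0∞) (p q : ℝ≥0∞) (hp : 1 < p) (hq : 1 < q)
    (Cw Cv : ℝ≥0∞) (hCw : Cw ≠ ∞) (hCv : Cv ≠ ∞)
    (hw : Measurable w) (hv : Measurable v)
    (hwloc : ∀ (c : EuclideanSpace ℝ (Fin n)) (r : ℝ), 0 < r →
      0 < (∫⁻ x in ball c r, w x) ∧ (∫⁻ x in ball c r, w x) ≠ ∞)
    (hvwloc : ∀ (c : EuclideanSpace ℝ (Fin n)) (r : ℝ), 0 < r →
      0 < (∫⁻ x in ball c r, v x * w x) ∧ (∫⁻ x in ball c r, v x * w x) ≠ ∞)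
    (hRHp : rhBound n w p Cw) (hRHq : rhBoundW n w v q Cv)
    (c : EuclideanSpace ℝ (Fin n)) (r : ℝ) (hr : 0 < r)
    (E : Set (EuclideanSpace ℝ (Fin n))) (hE : MeasurableSet E) (hEB : E ⊆ ball c r) :
    (∫⁻ x in E, v x * w x) / (∫⁻ x in ball c r, v x * w x) ≤
      Cv * Cw ^ ((1 - 1/q).toReal) *
        ((volume E) / (volume (ball c r))) ^ (((1 - 1/p) * (1 - 1/q)).toReal) :=
  rh_rhw_measure_estimate_general n w v p q hp hq Cw Cv hw hv hwloc hRHp hRHq c r hr E hE hEB
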